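/- Let (D, F) be a consistent classical-deterministic causal model, let s be a source vertex of D, fix o_s ∈ O_s, and let F' be the reduced model parameters on V ∖ {s} (partial application ω_v(o_s, ·) for children of s, ω_v otherwise). Then the dependency graph G of F' (edge ℓ → v iff ω'_v depends nontrivially on its O_ℓ-coordinate) is a siblings-on-cycles graph: every directed cycle of G contains two vertices that share a common parent in G. -/

import Mathlib

set_option autoImplicit false

/-- A function `f` on a dependent product depends only on the coordinates in `S`:
its value is unchanged when the argument is modified outside of `S`. -/
def DependsOnlyOn {V : Type} {O : V → Type} {α : Type} (f : (∀ v, O v) → α) (S : Set V) : Prop :=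
  ∀ o o' : ∀ v, O v, (∀ v ∈ S, o v = o' v) → f o = f o'

/-- A function `f` on a dependent product depends nontrivially on the coordinate `ℓ`:
there are two arguments that differ only at `ℓ` and get assigned different values. -/
def NontrivDependsOn {V : Type} {O : V → Type} {α : Type} (f : (∀ v, O v) → α) (ℓ : V) : Prop :=
  ∃ o o' : ∀ v, O v, (∀ k, k ≠ ℓ → o k = o' k) ∧ f o ≠ f o'

/-- `c` is a directed cycle (of length `n`, with pairwise distinct vertices) in the
digraph with edge relation `E`. -/
def IsDirCycle {V : Type} (E : V → V → Prop) {n : ℕ} (c : ZMod n → V) : Prop :=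
  0 < n ∧ Function.Injective c ∧ ∀ i, E (c i) (c (i + 1))

/-- The directed cycle `c` has a chord: an edge `c i → c j` with `j ≠ i + 1 (mod n)`. -/
def HasChord {V : Type} (E : V → V → Prop) {n : ℕ} (c : ZMod n → V) : Prop :=
  ∃ i j : ZMod n, E (c i) (c j) ∧ j ≠ i + 1

/-- A digraph is a siblings-on-cycles graph if every directed cycle contains two
(distinct) vertices that share a common parent. -/
def SiblingsOnCycles {V : Type} (E : V → V → Prop) : Prop :=
  ∀ (n : ℕ) (c : ZMod n → V), IsDirCycle E c →
    ∃ i j : ZMod n, i ≠ j ∧ ∃ p, E p (c i) ∧ E p (c j)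

open Classical in
/-- The deterministic correlation `p(a|x) = [g(x) = a]` induced by a function `g`. -/
noncomputable def detCorr {V : Type} {X A : V → Type} (g : (∀ v, X v) → ∀ v, A v) :
    (∀ v, X v) → (∀ v, A v) → ℝ :=
  fun x a => if a = g x then 1 else 0

/-- A classical-deterministic causal model: a finite vertex set `V`, a digraph `E`
(the causal structure), finite nonempty output- and input-sets `O v`, `I v`, and the
model parameters `ω v : (∀ ℓ, O ℓ) → I v`.  (That `ω v` only depends on the
coordinates of the parents of `v` is expressed by `StructComp` below.) -/
structure CDModel where
  V : Type
  [fintV : Fintype V]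
  [decV : DecidableEq V]
  E : V → V → Prop
  O : V → Type
  I : V → Type
  [fintO : ∀ v, Fintype (O v)]
  [neO : ∀ v, Nonempty (O v)]
  [fintI : ∀ v, Fintype (I v)]
  [neI : ∀ v, Nonempty (I v)]
  ω : ∀ v, (∀ ℓ, O ℓ) → I v

attribute [instance] CDModel.fintV CDModel.decV CDModel.fintO CDModel.neO CDModel.fintI CDModel.neI

namespace CDModel

variable (M : CDModel)

/-- The parents of `v`. -/
def Pa (v : M.V) : Set M.V := {k | M.E k v}

/-- The children of `s`. -/
def Ch (s : M.V) : Set M.V := {v | M.E s v}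

/-- A source vertex: a vertex without parents. -/
def IsSource (s : M.V) : Prop := ∀ k, ¬ M.E k s

/-- The digraph `E` is a causal structure for the model parameters, i.e. each `ω v`
is a function of the outputs of the parents of `v` only. -/
def StructComp : Prop := ∀ v, DependsOnlyOn (M.ω v) (M.Pa v)

/-- Faithfulness: each `ω v` depends nontrivially on each of the parents of `v`. -/
def Faithful : Prop := ∀ ℓ v, M.E ℓ v → NontrivDependsOn (M.ω v) ℓ

open Classical in
/-- `g` witnesses the consistency condition for the interventions `μ`: for all
settings `x` and results `a`, the number of pairs `(i, o)` with `ω v o = i v` and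
`μ v (x v, i v) = (a v, o v)` (for all `v`) is `1` if `a = g x` and `0` otherwise. -/
def IsWitness (X A : M.V → Type) (μ : ∀ v, X v × M.I v → A v × M.O v)
    (g : (∀ v, X v) → ∀ v, A v) : Prop :=
  ∀ (x : ∀ v, X v) (a : ∀ v, A v),
    Nat.card {io : (∀ v, M.I v) × (∀ v, M.O v) //
      (∀ v, M.ω v io.2 = io.1 v) ∧ ∀ v, μ v (x v, io.1 v) = (a v, io.2 v)} =
    if a = g x then 1 else 0

/-- Consistency: every family of interventions admits a witnessing function `g`. -/
def Consistent : Prop :=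
  ∀ (X A : M.V → Type)
    (_ : ∀ v, Fintype (X v)) (_ : ∀ v, Nonempty (X v))
    (_ : ∀ v, Fintype (A v)) (_ : ∀ v, Nonempty (A v))
    (μ : ∀ v, X v × M.I v → A v × M.O v),
    ∃ g : (∀ v, X v) → ∀ v, A v, M.IsWitness X A μ g

/-- Extend an assignment of outputs on `V ∖ {s}` to all of `V` by putting `os` at `s`. -/
def extendAt (s : M.V) (os : M.O s) (o : ∀ v : {v : M.V // v ≠ s}, M.O v.1) (ℓ : M.V) :
    M.O ℓ :=
  if h : ℓ = s then cast (congrArg M.O h.symm) os else o ⟨ℓ, h⟩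

/-- The reduced causal model obtained by fixing the output `os` of the source `s`:
the vertex `s` and all its incident edges are removed, and each model parameter is
partially applied at the coordinate `s` (which keeps `ω v` unchanged for non-children
of `s`). -/
def reduce (s : M.V) (os : M.O s) : CDModel where
  V := {v : M.V // v ≠ s}
  E := fun a b => M.E a.1 b.1
  O := fun v => M.O v.1
  I := fun v => M.I v.1
  ω := fun v o => M.ω v.1 (M.extendAt s os o)

/-- The dependency graph of the model parameters: edge `ℓ → v` iff `ω v` depends
nontrivially on its `O ℓ`-coordinate. -/
def depGraph : M.V → M.V → Prop := fun ℓ v => NontrivDependsOn (M.ω v) ℓ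

/-- Replace the causal structure by the dependency graph of the model parameters. -/
def restrictDep : CDModel where
  V := M.V
  E := M.depGraph
  O := M.O
  I := M.I
  ω := M.ω

/-- One step of the flow: fix an output value of a source, pass to the reduced model,
and restrict its causal structure to the dependency graph of the reduced parameters. -/
def flowStep (s : M.V) (os : M.O s) : CDModel := (M.reduce s os).restrictDep

end CDModel

/-- Reachability of one causal model from another by a finite sequence of flow steps,
each fixing an output value of a source vertex of the current causal structure. -/
inductive Reaches : CDModel → CDModel → Prop where
  | refl (M : CDModel) : Reaches M M
  | tail {M N : CDModel} (s : M.V) (hs : M.IsSource s) (os : M.O s)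
      (h : Reaches (M.flowStep s os) N) : Reaches M N

/-- Causal correlations, defined recursively: a family of correlations on at most one
agent is causal; and a correlation is causal if it decomposes as a convex combination
over a first agent `v` of a local conditional distribution for `v` times correlations
for the remaining agents (depending on `v`'s setting and result) that are again causal. -/
inductive IsCausal : ∀ (S : Type) (X A : S → Type), ((∀ v, X v) → (∀ v, A v) → ℝ) → Prop where
  | base {S : Type} [Fintype S] {X A : S → Type}
      (p : (∀ v, X v) → (∀ v, A v) → ℝ) (h : Fintype.card S ≤ 1) : IsCausal S X A p
  | step {S : Type} [Fintype S] [DecidableEq S] {X A : S → Type} [∀ v, Fintype (A v)]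
      (p : (∀ v, X v) → (∀ v, A v) → ℝ)
      (q : S → ℝ) (hq0 : ∀ v, 0 ≤ q v) (hq1 : ∑ v, q v = 1)
      (pv : ∀ v : S, X v → A v → ℝ)
      (hpv0 : ∀ v x a, 0 ≤ pv v x a) (hpv1 : ∀ v x, ∑ a, pv v x a = 1)
      (pr : ∀ v : S, X v → A v →
        (∀ u : {u : S // u ≠ v}, X u.1) → (∀ u : {u : S // u ≠ v}, A u.1) → ℝ)
      (hpr : ∀ v xv av, IsCausal {u : S // u ≠ v} (fun u => X u.1) (fun u => A u.1) (pr v xv av))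
      (hdec : ∀ x a, p x a =
        ∑ v, q v * pv v (x v) (a v) * pr v (x v) (a v) (fun u => x u.1) (fun u => a u.1)) :
      IsCausal S X A p

/-- Convenience constructor for classical-deterministic causal models. -/
abbrev mkModel (V : Type) [Fintype V] [DecidableEq V] (E : V → V → Prop) (O I : V → Type)
    [∀ v, Fintype (O v)] [∀ v, Nonempty (O v)] [∀ v, Fintype (I v)] [∀ v, Nonempty (I v)]
    (ω : ∀ v, (∀ ℓ, O ℓ) → I v) : CDModel :=
  { V := V, E := E, O := O, I := I, ω := ω }

/-! A consistent model admits, for every choice of local response functions `F v : I v → O v`,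
a fixed point `o v = F v (ω v o)`: this is consistency for trivial settings and results.
Fixing the source output by a constant response passes fixed points on to the reduced model.
On a directed cycle of the dependency graph without siblings, each cycle vertex `c (j + 1)`
sees, besides its predecessor `c j`, only parents that feed no other cycle vertex; freezing
those at suitable background values makes each edge a two-state switch. Responses that copy
the switch along every edge except one, where they invert it, then leave no fixed point. -/

open Function

theorem ZMod.not_forall_add_one_iff_xor {n : ℕ} [NeZero n] (b : ZMod n → Prop) :
    ¬ ∀ j, (b (j + 1) ↔ Xor (b j) (j + 1 = 0)) := by
  classical
  intro h
  set f : ZMod n → ZMod 2 := fun k => if b k then 1 else 0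
  have hf : ∀ j, f (j + 1) = f j + if j + 1 = 0 then 1 else 0 := by
    intro j
    simp only [f, h j]
    by_cases hb : b j <;> by_cases hj : j + 1 = 0 <;> simp [hb, hj, show (1 : ZMod 2) + 1 = 0 from rfl]
  have hshift : ∀ g : ZMod n → ZMod 2, ∑ j, g (j + 1) = ∑ j, g j :=
    fun g => Fintype.sum_equiv (Equiv.addRight 1) _ _ fun _ => rfl
  have hone : ∑ j : ZMod n, (if j + 1 = 0 then (1 : ZMod 2) else 0) = 1 := by
    rw [hshift fun j => if j = 0 then 1 else 0, Finset.sum_ite_eq' Finset.univ (0 : ZMod n)]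
    simp
  -- the increments of `f` around the cycle sum to `0`, but by `hf` they sum to `1`
  have := hshift f
  simp only [hf, Finset.sum_add_distrib, hone, add_eq_left] at this
  exact absurd this (by decide)

theorem dependsOnlyOn_setOf_nontrivDependsOn {V : Type} [Finite V] {O : V → Type} {α : Type}
    (f : (∀ v, O v) → α) : DependsOnlyOn f {ℓ | NontrivDependsOn f ℓ} := by
  classical
  have := Fintype.ofFinite V
  intro o o' h
  suffices key : ∀ (t : Finset V) (o : ∀ v, O v), (∀ v ∉ t, o v = o' v) →
      (∀ v, NontrivDependsOn f v → o v = o' v) → f o = f o' from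
    key Finset.univ o (by simp) h
  intro t
  induction t using Finset.induction_on with
  | empty => exact fun o ho _ => congrArg f (funext fun v => ho v (Finset.notMem_empty v))
  | insert a t _ ih =>
    intro o ho hdep
    have hupdate : f o = f (update o a (o' a)) := by
      by_cases ha : NontrivDependsOn f a
      · rw [← hdep a ha, update_eq_self]
      · by_contra hne
        exact ha ⟨o, _, fun k hk => (update_of_ne hk _ _).symm, hne⟩
    rw [hupdate]
    refine ih _ (fun v hv => ?_) (fun v hv => ?_) <;> by_cases hva : v = a
    · subst hva; simp
    · rw [update_of_ne hva]; exact ho v (by simp [hva, hv])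
    · subst hva; simp
    · rw [update_of_ne hva]; exact hdep v hv

namespace CDModel

variable {M : CDModel}

def HasFixedPoints (M : CDModel) : Prop :=
  ∀ F : ∀ v, M.I v → M.O v, ∃ o : ∀ v, M.O v, ∀ v, F v (M.ω v o) = o v

theorem Consistent.hasFixedPoints (hM : M.Consistent) : M.HasFixedPoints := by
  intro F
  obtain ⟨g, hg⟩ := hM (fun _ => PUnit) (fun _ => PUnit) (fun _ => inferInstance)
    (fun _ => inferInstance) (fun _ => inferInstance) (fun _ => inferInstance)
    (fun v xi => (PUnit.unit, F v xi.2))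
  have hcard := hg (fun _ => PUnit.unit) (fun _ => PUnit.unit)
  rw [if_pos (Subsingleton.elim _ _), Nat.card_eq_one_iff_unique] at hcard
  obtain ⟨⟨⟨i, o⟩, hω, hF⟩⟩ := hcard.2
  exact ⟨o, fun v => by simpa [hω v] using congrArg Prod.snd (hF v)⟩

theorem extendAt_restrict {s : M.V} {os : M.O s} {o : ∀ v, M.O v} (hos : o s = os) :
    M.extendAt s os (fun w => o w.1) = o := by
  funext v
  by_cases h : v = s
  · subst h; simp [extendAt, hos]
  · simp [extendAt, h]

theorem HasFixedPoints.reduce (hM : M.HasFixedPoints) (s : M.V) (os : M.O s) :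
    (M.reduce s os).HasFixedPoints := by
  intro F
  obtain ⟨o, ho⟩ := hM fun v i => if h : v = s then cast (congrArg M.O h.symm) os
    else F ⟨v, h⟩ i
  have hos : o s = os := by simpa using (ho s).symm
  refine ⟨fun w => o w.1, fun (w : {v : M.V // v ≠ s}) => ?_⟩
  change F w (M.ω w.1 (M.extendAt s os fun w => o w.1)) = o w.1
  rw [extendAt_restrict hos]
  exact (dif_neg w.2).symm.trans (ho w.1)

section Cycle

variable {n : ℕ} [NeZero n] {c : ZMod n → M.V}

theorem exists_index_of_parent_of_cycle
    (hsib : ∀ p i j, M.depGraph p (c i) → M.depGraph p (c j) → i = j) :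
    ∃ J : M.V → ZMod n, ∀ p j, M.depGraph p (c (j + 1)) → J p = j := by
  classical
  refine ⟨fun p => if h : ∃ j, M.depGraph p (c (j + 1)) then h.choose else 0, fun p j hp => ?_⟩
  have h : ∃ j, M.depGraph p (c (j + 1)) := ⟨j, hp⟩
  simp only [dif_pos h]
  exact add_right_cancel (hsib p _ _ h.choose_spec hp)

theorem exists_switches (hinj : Injective c) (hc : ∀ j, M.depGraph (c j) (c (j + 1)))
    (hsib : ∀ p i j, M.depGraph p (c i) → M.depGraph p (c j) → i = j) :
    ∃ (q r : ∀ v, M.O v) (T : ∀ v, M.I v), (∀ j, q (c j) ≠ r (c j)) ∧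
      ∀ x : ∀ v, M.O v, (∀ v, x v = q v ∨ x v = r v) → ∀ j,
        (M.ω (c (j + 1)) x = T (c (j + 1)) ↔ x (c j) = r (c j)) := by
  classical
  obtain ⟨J, hJ⟩ := exists_index_of_parent_of_cycle hsib
  have hJc : ∀ j, J (c j) = j := fun j => hJ _ _ (hc j)
  choose o o' hoo' hne using hc
  -- at a parent of `c (j + 1)`, `q` and `r` take the values of the witnesses `o j` and `o' j`
  refine ⟨fun v => o (J v) v, fun v => o' (J v) v, fun v => M.ω v (o' (invFun c v - 1)), ?_, ?_⟩
  · intro j h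
    apply hne j
    congr 1
    funext v
    by_cases hv : v = c j
    · subst hv; simpa [hJc] using h
    · exact hoo' j v hv
  · intro x hx j
    simp only [leftInverse_invFun hinj (j + 1), add_sub_cancel_right]
    have hpar : ∀ p, M.depGraph p (c (j + 1)) → p ≠ c j → x p = o j p ∧ x p = o' j p := by
      intro p hp hpj
      rcases hx p with h | h <;> simp [h, hJ p j hp, hoo' j p hpj]
    constructor
    · intro hT
      by_contra hr
      have hq : x (c j) = o j (c j) := by simpa [hJc] using (hx (c j)).resolve_right hr
      refine hne j (Eq.trans ?_ hT)
      refine dependsOnlyOn_setOf_nontrivDependsOn _ _ _ fun p hp => ?_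
      by_cases hpj : p = c j
      · subst hpj; exact hq.symm
      · exact (hpar p hp hpj).1.symm
    · intro hr
      refine dependsOnlyOn_setOf_nontrivDependsOn _ _ _ fun p hp => ?_
      by_cases hpj : p = c j
      · subst hpj; simpa [hJc] using hr
      · exact (hpar p hp hpj).2

theorem HasFixedPoints.false_of_switches (hM : M.HasFixedPoints) (hinj : Injective c)
    {q r : ∀ v, M.O v} {T : ∀ v, M.I v} (hqr : ∀ j, q (c j) ≠ r (c j))
    (hT : ∀ x : ∀ v, M.O v, (∀ v, x v = q v ∨ x v = r v) → ∀ j,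
        (M.ω (c (j + 1)) x = T (c (j + 1)) ↔ x (c j) = r (c j))) : False := by
  classical
  obtain ⟨x, hx⟩ := hM fun v i => if Xor (i = T v) (invFun c v = 0) then r v else q v
  have hxqr : ∀ v, x v = q v ∨ x v = r v := by
    intro v; rw [← hx v]; split_ifs <;> simp
  refine ZMod.not_forall_add_one_iff_xor (fun k => x (c k) = r (c k)) fun j => ?_
  rw [← hT x hxqr j, ← hx (c (j + 1)), leftInverse_invFun hinj (j + 1)]
  split_ifs with h <;> simp [h, hqr (j + 1)]

end Cycle

theorem HasFixedPoints.siblingsOnCycles_depGraph (hM : M.HasFixedPoints) :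
    SiblingsOnCycles M.depGraph := by
  rintro n c ⟨hn, hinj, hc⟩
  have : NeZero n := ⟨hn.ne'⟩
  by_contra! hsib
  obtain ⟨q, r, T, hqr, hT⟩ := exists_switches hinj hc fun p i j hi hj =>
    by_contra fun hij => hsib i j hij p hi hj
  exact hM.false_of_switches hinj hqr hT

end CDModel

theorem stmt5_general (M : CDModel) (hcons : M.Consistent)
    (s : M.V) (os : M.O s) :
    SiblingsOnCycles ((M.reduce s os).depGraph) :=
  (hcons.hasFixedPoints.reduce s os).siblingsOnCycles_depGraph

/-- **The reduced dependency graph is siblings-on-cycles.**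
Let `(D, F)` be a consistent causal model, `s` a source, and `o_s ∈ O_s`.  Then the
dependency graph of the reduced model parameters is a siblings-on-cycles graph. -/
theorem stmt5 (M : CDModel) (hstruct : M.StructComp) (hcons : M.Consistent)
    (s : M.V) (hs : M.IsSource s) (os : M.O s) :
    SiblingsOnCycles ((M.reduce s os).depGraph) :=
  stmt5_general M hcons s os
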